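/- arXiv:2010.14846 — 3 statements merged into one kernel-verified Lean document; each statement's English description precedes it below -/
import Mathlib

section
/- Suppose μ > 1, λ_1, …, λ_N > 0, and k_1, …, k_N > 1 are linked by k_i = (μλ_1 + ⋯ + μλ_i + λ_{i+1} + ⋯ + λ_N)/((μ-1)λ_i). Let v, v_1, …, v_N, w_1, …, w_N be elements of a real vector space satisfying w_i = v + v_1 + ⋯ + v_{i-1} + k_i v_i for each i, and v_1 + ⋯ + v_N = 0. Define t^i = (1/ξ_i)(μλ_1, …, μλ_{i-1}, λ_i, …, λ_N) where ξ_i = μ(λ_1 + ⋯ + λ_{i-1}) + λ_i + ⋯ + λ_N. Then Σ_j t^i_j w_j = v + v_1 + ⋯ + v_{i-1} for every i. -/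
open Finset

/-- The linear algebra lemma for `T_N` configurations: with the coefficients `k_i` determined
by the defining vector `(λ, μ)`, and `w_i = v + v_1 + ⋯ + v_{i-1} + k_i v_i`,
`v_1 + ⋯ + v_N = 0`, the averaged vectors `∑_j t^i_j w_j` recover `v + v_1 + ⋯ + v_{i-1}`. -/
theorem linear_lemma {V : Type*} [AddCommGroup V] [Module ℝ V]
    {N : ℕ} (hN : 2 ≤ N) (μ : ℝ) (hμ : 1 < μ)
    (l : Fin N → ℝ) (hl : ∀ i, 0 < l i)
    (k : Fin N → ℝ) (hk : ∀ i, 1 < k i)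
    (hlink : ∀ i : Fin N,
      k i = (μ * ∑ j ∈ univ.filter (fun j => j ≤ i), l j
              + ∑ j ∈ univ.filter (fun j => i < j), l j) / ((μ - 1) * l i))
    (v : V) (vv : Fin N → V) (w : Fin N → V)
    (hw : ∀ i : Fin N, w i = v + (∑ j ∈ univ.filter (fun j => j < i), vv j) + k i • vv i)
    (hsum : ∑ j, vv j = 0)
    (ξ : Fin N → ℝ)
    (hξ : ∀ i : Fin N, ξ i = μ * (∑ j ∈ univ.filter (fun j => j < i), l j)
            + ∑ j ∈ univ.filter (fun j => i ≤ j), l j)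
    (t : Fin N → Fin N → ℝ)
    (ht : ∀ i j : Fin N, t i j = (if j < i then μ * l j else l j) / ξ i) :
    ∀ i : Fin N, (∑ j, t i j • w j) = v + ∑ j ∈ univ.filter (fun j => j < i), vv j := by
  intro i
  have hμ1 : (0:ℝ) < μ - 1 := by linarith
  have hμ1' : (μ:ℝ) - 1 ≠ 0 := ne_of_gt hμ1
  set L : ℝ := ∑ j, l j with hL
  -- ξ i is positive
  have hApos : (0:ℝ) ≤ ∑ j ∈ univ.filter (fun j => j < i), l j :=
    Finset.sum_nonneg fun j _ => (hl j).le
  have hCpos : (0:ℝ) < ∑ j ∈ univ.filter (fun j => i ≤ j), l j :=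
    Finset.sum_pos (fun j _ => hl j) ⟨i, by simp⟩
  have hξpos : 0 < ξ i := by rw [hξ]; nlinarith
  have hξne : ξ i ≠ 0 := ne_of_gt hξpos
  -- total = (j < i) part plus (i ≤ j) part
  have hsplitL : (∑ j ∈ univ.filter (fun j => j < i), l j)
      + ∑ j ∈ univ.filter (fun j => i ≤ j), l j = L := by
    rw [hL, ← Finset.sum_filter_add_sum_filter_not univ (fun j => j < i) l]
    congr 1
    apply Finset.sum_congr _ (fun _ _ => rfl)
    apply Finset.filter_congr
    intro j _
    simp [not_lt]
  -- the coefficients sum to 1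
  have ht1 : ∑ j, t i j = 1 := by
    rw [Finset.sum_congr rfl fun j (_ : j ∈ univ) => ht i j, ← Finset.sum_div]
    have : (∑ j, (if j < i then μ * l j else l j)) = ξ i := by
      rw [← Finset.sum_filter_add_sum_filter_not univ (fun j => j < i)
        (fun j => if j < i then μ * l j else l j), hξ]
      congr 1
      · rw [Finset.mul_sum]
        exact Finset.sum_congr rfl fun j hj => by
          simp only [Finset.mem_filter] at hj; rw [if_pos hj.2]
      · apply Finset.sum_congr
        · apply Finset.filter_congr; intro j _; simp [not_lt]
        · intro j hj
          simp only [Finset.mem_filter] at hj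
          rw [if_neg (not_lt.2 hj.2)]
    rw [this, div_self hξne]
  set c : ℝ := μ * L / ((μ - 1) * ξ i) with hc
  -- the key coefficient computation
  have key : ∀ m : Fin N,
      (∑ j ∈ univ.filter (fun j => m < j), t i j) + t i m * k m
        = c + (if m < i then 1 else 0) := by
    intro m
    have hlm : l m ≠ 0 := ne_of_gt (hl m)
    rcases lt_or_ge m i with h | h
    · -- case m < i
      rw [if_pos h]
      set P : ℝ := ∑ j ∈ univ.filter (fun j => j ≤ m), l j with hPdef
      set Q : ℝ := ∑ j ∈ univ.filter (fun j => m < j ∧ j < i), l j with hQdef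
      set R : ℝ := ∑ j ∈ univ.filter (fun j => i ≤ j), l j with hRdef
      have e1 : ∑ j ∈ univ.filter (fun j => m < j), t i j = (μ * Q + R) / ξ i := by
        rw [Finset.sum_congr rfl (fun j _ => ht i j), ← Finset.sum_div]
        congr 1
        rw [hQdef, hRdef, Finset.mul_sum, Finset.sum_filter, Finset.sum_filter,
          Finset.sum_filter, ← Finset.sum_add_distrib]
        refine Finset.sum_congr rfl fun j _ => ?_
        by_cases h1 : m < j <;> by_cases h2 : j < i
        · rw [if_pos h1, if_pos h2, if_pos ⟨h1, h2⟩, if_neg (not_le.2 h2), add_zero]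
        · rw [if_pos h1, if_neg h2, if_neg (fun hx => h2 hx.2), if_pos (not_lt.1 h2),
            zero_add]
        · rw [if_neg h1, if_neg (fun hx => h1 hx.1), if_neg (not_le.2 h2), add_zero]
        · exact absurd (lt_of_le_of_lt (not_lt.1 h1) h) h2
      have e2 : (∑ j ∈ univ.filter (fun j => j < i), l j) = P + Q := by
        rw [hPdef, hQdef, Finset.sum_filter, Finset.sum_filter, Finset.sum_filter,
          ← Finset.sum_add_distrib]
        refine Finset.sum_congr rfl fun j _ => ?_
        by_cases h1 : j ≤ m <;> by_cases h2 : j < i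
        · rw [if_pos h2, if_pos h1, if_neg (fun hx => absurd hx.1 (not_lt.2 h1)), add_zero]
        · exact absurd (lt_of_le_of_lt h1 h) h2
        · rw [if_pos h2, if_neg h1, if_pos ⟨not_le.1 h1, h2⟩, zero_add]
        · rw [if_neg h2, if_neg h1, if_neg (fun hx => h2 hx.2), add_zero]
      have e3 : (∑ j ∈ univ.filter (fun j => m < j), l j) = Q + R := by
        rw [hQdef, hRdef, Finset.sum_filter, Finset.sum_filter, Finset.sum_filter,
          ← Finset.sum_add_distrib]
        refine Finset.sum_congr rfl fun j _ => ?_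
        by_cases h1 : m < j <;> by_cases h2 : j < i
        · rw [if_pos h1, if_pos ⟨h1, h2⟩, if_neg (not_le.2 h2), add_zero]
        · rw [if_pos h1, if_neg (fun hx => h2 hx.2), if_pos (not_lt.1 h2), zero_add]
        · rw [if_neg h1, if_neg (fun hx => h1 hx.1), if_neg (not_le.2 h2), add_zero]
        · exact absurd (lt_of_le_of_lt (not_lt.1 h1) h) h2
      have hLpqr : L = P + Q + R := by rw [← hsplitL, e2]
      have hxi : ξ i = μ * (P + Q) + R := by rw [hξ, e2]
      have hξne' : μ * (P + Q) + R ≠ 0 := by rw [← hxi]; exact hξne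
      rw [e1, ht, if_pos h, hlink, e3, hc, hLpqr, hxi]
      field_simp
      ring
    · -- case i ≤ m
      rw [if_neg (not_lt.2 h), add_zero]
      set P : ℝ := ∑ j ∈ univ.filter (fun j => j ≤ m), l j with hPdef
      set B : ℝ := ∑ j ∈ univ.filter (fun j => m < j), l j with hBdef
      have e1 : ∑ j ∈ univ.filter (fun j => m < j), t i j = B / ξ i := by
        rw [hBdef, Finset.sum_div]
        refine Finset.sum_congr rfl fun j hj => ?_
        simp only [Finset.mem_filter] at hj
        rw [ht, if_neg (not_lt.2 (h.trans hj.2.le))]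
      have hLpb : L = P + B := by
        rw [hL, ← Finset.sum_filter_add_sum_filter_not univ (fun j => j ≤ m) l,
          hPdef, hBdef]
        congr 1
        apply Finset.sum_congr _ (fun _ _ => rfl)
        apply Finset.filter_congr
        intro j _
        simp [not_le]
      rw [e1, ht, if_neg (not_lt.2 h), hlink, hc, hLpb]
      field_simp
      ring
  -- expand w and regroup
  have expand : ∀ j : Fin N, t i j • w j
      = t i j • v + (∑ m ∈ univ.filter (fun m => m < j), t i j • vv m)
        + (t i j * k j) • vv j := by
    intro j
    rw [hw j, smul_add, smul_add, Finset.smul_sum, mul_smul]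
  rw [Finset.sum_congr rfl fun j _ => expand j, Finset.sum_add_distrib,
    Finset.sum_add_distrib, ← Finset.sum_smul, ht1, one_smul]
  -- swap the double sum
  have hswap : (∑ j : Fin N, ∑ m ∈ univ.filter (fun m => m < j), t i j • vv m)
      = ∑ m : Fin N, ∑ j ∈ univ.filter (fun j => m < j), t i j • vv m := by
    rw [Finset.sum_congr rfl fun j (_ : j ∈ univ) => Finset.sum_filter _ _,
      Finset.sum_comm]
    exact Finset.sum_congr rfl fun m _ => (Finset.sum_filter _ _).symm
  rw [hswap]
  have : (∑ m : Fin N, ∑ j ∈ univ.filter (fun j => m < j), t i j • vv m)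
      + ∑ j : Fin N, (t i j * k j) • vv j
      = ∑ m : Fin N, ((∑ j ∈ univ.filter (fun j => m < j), t i j) + t i m * k m) • vv m := by
    rw [← Finset.sum_add_distrib]
    refine Finset.sum_congr rfl fun m _ => ?_
    rw [add_smul, ← Finset.sum_smul]
  rw [add_assoc, this, Finset.sum_congr rfl fun m _ => by rw [key m]]
  have : (∑ m : Fin N, (c + if m < i then (1:ℝ) else 0) • vv m)
      = c • (∑ m, vv m) + ∑ m ∈ univ.filter (fun m => m < i), vv m := by
    rw [Finset.smul_sum, Finset.sum_filter, ← Finset.sum_add_distrib]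
    refine Finset.sum_congr rfl fun m _ => ?_
    rw [add_smul, ite_smul, one_smul, zero_smul]
  rw [this, hsum, smul_zero, zero_add]
end

section
/- Let μ > 1 and N ≥ 2. Suppose x ∈ ℝ^N satisfies x_i = a_i x_{h(i)} for all i ∈ {1,…,N}, where h : {1,…,N} → {1,…,N} is a function and a_i = 1 if h(i) > i while a_i = μ if h(i) ≤ i. Then x = 0. -/
/-- The propagation argument: if `x_i = a_i x_{h(i)}` with `a_i = 1` when `h(i) > i` and
`a_i = μ > 1` when `h(i) ≤ i`, then `x = 0`. -/
theorem propagation_zero {N : ℕ} (hN : 2 ≤ N) (μ : ℝ) (hμ : 1 < μ)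
    (h : Fin N → Fin N) (x : Fin N → ℝ)
    (hx : ∀ i : Fin N, x i = (if i < h i then (1 : ℝ) else μ) * x (h i)) :
    x = 0 := by
  set c : Fin N → ℝ := fun j => if j < h j then (1 : ℝ) else μ with hcdef
  have hc1 : ∀ j, 1 ≤ c j := by
    intro j; simp only [hcdef]; split
    · exact le_refl _
    · linarith
  have key : ∀ (n : ℕ) (i : Fin N),
      x i = (∏ r ∈ Finset.range n, c (h^[r] i)) * x (h^[n] i) := by
    intro n
    induction n with
    | zero => intro i; simp
    | succ n ih =>
      intro i
      rw [Finset.prod_range_succ, Function.iterate_succ_apply', mul_assoc,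
        ← hx (h^[n] i)]
      exact ih i
  funext i
  -- pigeonhole: the orbit of i repeats
  have hninj : ¬ Function.Injective (fun k : Fin (N + 1) => h^[(k : ℕ)] i) := by
    intro hinj
    have := Fintype.card_le_of_injective _ hinj
    simp at this
  rw [Function.not_injective_iff] at hninj
  obtain ⟨a, b, hab, hne⟩ := hninj
  wlog hlt : (a : ℕ) < (b : ℕ) generalizing a b
  · exact this b a hab.symm hne.symm (by omega : (b:ℕ) < (a:ℕ))
    -- need (b:ℕ) < (a:ℕ); from hne : a ≠ b and not a < b
  set p : Fin N := h^[(a : ℕ)] i with hp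
  set L : ℕ := (b : ℕ) - (a : ℕ) with hL
  have hL1 : 1 ≤ L := by omega
  have hper : h^[L] p = p := by
    rw [hp, ← Function.iterate_add_apply]
    have : L + (a : ℕ) = (b : ℕ) := by omega
    rw [this]; exact hab.symm
  have hxp : x p = 0 := by
    by_contra hxp0
    have hkey := key L p
    rw [hper] at hkey
    set C := ∏ r ∈ Finset.range L, c (h^[r] p) with hC
    have hC1 : C = 1 := by
      have : (C - 1) * x p = 0 := by ring_nf; linarith [hkey]
      rcases mul_eq_zero.mp this with h1 | h2
      · linarith
      · exact absurd h2 hxp0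
    have hall : ∀ r ∈ Finset.range L, c (h^[r] p) = 1 := by
      intro r hr
      by_contra hne1
      have hμle : μ ≤ c (h^[r] p) := by
        rcases lt_or_ge (h^[r] p) (h (h^[r] p)) with hlt' | hge
        · exact absurd (by simp [hcdef, hlt']) hne1
        · simp [hcdef, not_lt.mpr hge]
      have herase : (1 : ℝ) ≤ ∏ j ∈ (Finset.range L).erase r, c (h^[j] p) := by
        calc (1 : ℝ) = ∏ _j ∈ (Finset.range L).erase r, (1 : ℝ) := by simp
        _ ≤ _ := Finset.prod_le_prod (by simp) (fun j _ => hc1 _)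
      have : μ ≤ C := by
        rw [hC, ← Finset.mul_prod_erase _ _ hr]
        calc μ = μ * 1 := by ring
        _ ≤ c (h^[r] p) * ∏ j ∈ (Finset.range L).erase r, c (h^[j] p) :=
          mul_le_mul hμle herase zero_le_one (le_trans zero_le_one (hc1 _))
      linarith [hC1]
    have hstep : ∀ r < L, h^[r] p < h^[r + 1] p := by
      intro r hr
      have := hall r (Finset.mem_range.mpr hr)
      simp only [hcdef] at this
      split at this
      · rwa [Function.iterate_succ_apply']
      · exfalso; linarith
    have hgrow : ∀ r, r ≤ L → 1 ≤ r → p < h^[r] p := by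
      intro r
      induction r with
      | zero => intro _ h1; omega
      | succ r ih =>
        intro hrL _
        rcases Nat.eq_or_lt_of_le (Nat.one_le_iff_ne_zero.mpr (Nat.succ_ne_zero r)) with h1 | h1
        · have hr0 : r = 0 := by omega
          subst hr0
          simpa using hstep 0 (by omega)
        · have h2 : 1 ≤ r := by omega
          have := ih (by omega) h2
          exact lt_trans this (hstep r (by omega))
    have := hgrow L le_rfl hL1
    rw [hper] at this
    exact lt_irrefl _ this
  have := key (a : ℕ) i
  rw [← hp, hxp, mul_zero] at this
  simpa using this
end

section
/- Let h : ℝ^k → ℝ be C¹ and convex with linear growth, and assume the recession function h*(z) = lim_{t→0⁺} t·h(z/t) exists and is finite for all z. Suppose that for all z₁, z₂: (Dh(z₂), z₂ - z₁) ≤ h(z₁) + h(z₂). Then h* is even: h*(z) = h*(-z) for all z ∈ ℝ^k. -/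
/-!
Convexity gives `h x - h 0 ≤ ⟪Dh x, x⟫`, and the hypothesis at `z₁ = -x`, `z₂ = x` gives
`2 ⟪Dh x, x⟫ ≤ h x + h (-x)`; together `h x ≤ h (-x) + 2 h 0`. Rescaling with `x = z / t` and
letting `t → 0⁺` kills the constant, so `h*(z) ≤ h*(-z)` for every `z`.
-/

open RealInnerProductSpace Filter

theorem ConvexOn.add_fderiv_sub_le {E : Type*} [NormedAddCommGroup E] [NormedSpace ℝ E]
    {f : E → ℝ} {f' : E →L[ℝ] ℝ} (hf : ConvexOn ℝ Set.univ f) {x : E}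
    (hf' : HasFDerivAt f f' x) (y : E) : f x + f' (y - x) ≤ f y := by
  let g : ℝ → ℝ := f ∘ AffineMap.lineMap x y
  have hg : ConvexOn ℝ Set.univ g := by
    simpa using hf.comp_affineMap (AffineMap.lineMap x y)
  have hg' : HasDerivAt g (f' (y - x)) 0 :=
    (by simpa using hf' : HasFDerivAt f f' (AffineMap.lineMap x y (0 : ℝ))).comp_hasDerivAt 0
      AffineMap.hasDerivAt_lineMap
  have := hg.le_slope_of_hasDerivWithinAt (Set.mem_univ 0) (Set.mem_univ 1) one_pos
    hg'.hasDerivWithinAt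
  simp only [g, slope_def_field, Function.comp_apply, AffineMap.lineMap_apply_one,
    AffineMap.lineMap_apply_zero, sub_zero, div_one] at this
  linarith

section Gradient

variable {E : Type*} [NormedAddCommGroup E] [InnerProductSpace ℝ E] [CompleteSpace E]
  {f : E → ℝ} {Df : E → E}

theorem ConvexOn.add_inner_gradient_sub_le (hf : ConvexOn ℝ Set.univ f) {x : E}
    (hDf : HasGradientAt f (Df x) x) (y : E) : f x + ⟪Df x, y - x⟫ ≤ f y := by
  simpa using hf.add_fderiv_sub_le hDf.hasFDerivAt y

theorem ConvexOn.le_apply_neg_add_two_mul_apply_zero (hf : ConvexOn ℝ Set.univ f)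
    (hDf : ∀ z, HasGradientAt f (Df z) z) (hsymm : ∀ z₁ z₂, ⟪Df z₂, z₂ - z₁⟫ ≤ f z₁ + f z₂)
    (x : E) : f x ≤ f (-x) + 2 * f 0 := by
  have hconv : f x - f 0 ≤ ⟪Df x, x⟫ := by
    have := hf.add_inner_gradient_sub_le (hDf x) 0
    rw [zero_sub, inner_neg_right] at this
    linarith
  have hx := hsymm (-x) x
  rw [sub_neg_eq_add, ← two_smul ℝ x, real_inner_smul_right] at hx
  linarith

end Gradient

theorem le_of_tendsto_rescale_of_le_add_const {E : Type*} [AddCommGroup E] [Module ℝ E]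
    {f g : E → ℝ} {c a b : ℝ} (hfg : ∀ x, f x ≤ g x + c) {z : E}
    (hf : Tendsto (fun t : ℝ => t * f (t⁻¹ • z)) (nhdsWithin 0 (Set.Ioi 0)) (nhds a))
    (hg : Tendsto (fun t : ℝ => t * g (t⁻¹ • z)) (nhdsWithin 0 (Set.Ioi 0)) (nhds b)) :
    a ≤ b := by
  have hc : Tendsto (fun t : ℝ => t * c) (nhdsWithin 0 (Set.Ioi 0)) (nhds 0) := by
    simpa using ((continuous_mul_const c).tendsto 0).mono_left nhdsWithin_le_nhds
  refine le_of_tendsto_of_tendsto hf (by simpa using hg.add hc) ?_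
  filter_upwards [self_mem_nhdsWithin] with t ht
  rw [← mul_add]
  exact mul_le_mul_of_nonneg_left (hfg _) ht.le

theorem recession_even_general {k : ℕ} (h : EuclideanSpace ℝ (Fin k) → ℝ)
    (Dh : EuclideanSpace ℝ (Fin k) → EuclideanSpace ℝ (Fin k))
    (hdiff : ∀ z, HasGradientAt h (Dh z) z)
    (hconv : ConvexOn ℝ Set.univ h)
    (hstar : EuclideanSpace ℝ (Fin k) → ℝ)
    (hlim : ∀ z, Tendsto (fun t : ℝ => t * h (t⁻¹ • z))
        (nhdsWithin (0 : ℝ) (Set.Ioi 0)) (nhds (hstar z)))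
    (hsymm : ∀ z₁ z₂, ⟪Dh z₂, z₂ - z₁⟫ ≤ h z₁ + h z₂) :
    ∀ z, hstar z = hstar (-z) := by
  have hle : ∀ z, hstar z ≤ hstar (-z) := fun z =>
    le_of_tendsto_rescale_of_le_add_const (g := fun x => h (-x))
      (hconv.le_apply_neg_add_two_mul_apply_zero hdiff hsymm) (hlim z)
      (by simpa only [smul_neg] using hlim (-z))
  intro z
  exact le_antisymm (hle z) (by simpa only [neg_neg] using hle (-z))

/-- If `h` is `C¹`, convex with linear growth and satisfies the symmetry inequality
`(Dh(z₂), z₂ - z₁) ≤ h(z₁) + h(z₂)`, then its recession function is even. -/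
theorem recession_even {k : ℕ} (h : EuclideanSpace ℝ (Fin k) → ℝ)
    (Dh : EuclideanSpace ℝ (Fin k) → EuclideanSpace ℝ (Fin k))
    (hdiff : ∀ z, HasGradientAt h (Dh z) z)
    (hDhcont : Continuous Dh)
    (hconv : ConvexOn ℝ Set.univ h)
    (A B : ℝ) (hgrowth : ∀ z, |h z| ≤ A * ‖z‖ + B)
    (hstar : EuclideanSpace ℝ (Fin k) → ℝ)
    (hlim : ∀ z, Tendsto (fun t : ℝ => t * h (t⁻¹ • z))
        (nhdsWithin (0 : ℝ) (Set.Ioi 0)) (nhds (hstar z)))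
    (hsymm : ∀ z₁ z₂, ⟪Dh z₂, z₂ - z₁⟫ ≤ h z₁ + h z₂) :
    ∀ z, hstar z = hstar (-z) :=
  recession_even_general h Dh hdiff hconv hstar hlim hsymm
end
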